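/- Let λ be an n-core and w the minimal-length coset representative with λ = w∅, and k_{w,α} = ⌊⟨w^{-1}(ρ/n), α⟩⌋. Then Σ_{j=1}^{n−1} k_{w, α_{1,j}} = ℓ(λ). -/

import Mathlib

open Finset

namespace Shi

/-- Number of boxes in column `j` (0-indexed) of the partition `lam` with `ℓ` positive parts:
the conjugate partition. -/
def conjP (lam : ℕ → ℕ) (ℓ j : ℕ) : ℕ := ((Finset.range ℓ).filter (fun i => j < lam i)).card

/-- Hook length of the (0-indexed) box `(i, j)` of the partition `lam` having `ℓ` positive
parts. -/
def hookP (lam : ℕ → ℕ) (ℓ i j : ℕ) : ℤ :=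
  (lam i : ℤ) - j + conjP lam ℓ j - i - 1

/-- `lam : ℕ → ℕ` (0-indexed, weakly decreasing, exactly `ℓ` positive parts) is an `n`-core:
no hook length is divisible by `n`. -/
def IsCore (n : ℕ) (lam : ℕ → ℕ) (ℓ : ℕ) : Prop :=
  Antitone lam ∧ (∀ i, 0 < lam i ↔ i < ℓ) ∧
    ∀ i j, i < ℓ → j < lam i → ¬ ((n : ℤ) ∣ hookP lam ℓ i j)

/-- The `k`-th β-number (first column hook length) of `lam`, 0-indexed. -/
def betaP (lam : ℕ → ℕ) (ℓ k : ℕ) : ℤ := (lam k : ℤ) + ℓ - k - 1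

/-- `x` is a bead of the original abacus of `lam`: a negative integer or a β-number. -/
def IsBead (lam : ℕ → ℕ) (ℓ : ℕ) (x : ℤ) : Prop := x < 0 ∨ ∃ k < ℓ, betaP lam ℓ k = x

/-- The vector `ρ = ((n-1)/2, (n-1)/2 - 1, …, (1-n)/2)`, half the sum of positive roots. -/
noncomputable def rhoV (n : ℕ) : Fin n → ℝ := fun i => ((n : ℝ) - 1) / 2 - ((i : ℕ) : ℝ)

/-- `w⁻¹(v)` for the affine transformation `w = t_a ∘ u` (translation by `a` after the
permutation `u`), i.e. `w⁻¹(v) = u⁻¹ · (v - a)`. -/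
noncomputable def winv (n : ℕ) (u : Equiv.Perm (Fin n)) (a : Fin n → ℤ) (v : Fin n → ℝ) : Fin n → ℝ :=
  fun i => v (u i) - (a (u i) : ℝ)

/-- `u` is the minimal length permutation sorting `-a` into antidominant position, i.e.
`a ∘ u` is weakly increasing and ties are broken stably; this is the finite part of the
minimal length coset representative `w = t_a u`. -/
def SortsMin {n : ℕ} (u : Equiv.Perm (Fin n)) (a : Fin n → ℤ) : Prop :=
  ∀ i j : Fin n, i < j → a (u i) < a (u j) ∨ (a (u i) = a (u j) ∧ u i < u j)

/-- `a` is the vector of level numbers of the balanced abacus of `lam`: for some shift `c`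
of the original abacus, the beads on runner `i` occupy exactly the levels `< a i`, and the
balance number is `0`. -/
def BalancedLevels (n : ℕ) (lam : ℕ → ℕ) (ℓ : ℕ) (a : Fin n → ℤ) : Prop :=
  (∑ i, a i) = 0 ∧ ∃ c : ℤ, ∀ i : Fin n, ∀ q : ℤ,
    IsBead lam ℓ (q * n + ((i : ℕ) : ℤ) - c) ↔ q < a i

/-!
Write `p_t = a_t n + t`. In the abacus shifted by `c`, runner `t` carries the beads at levels
`< a_t`, so its first gap is at `p_t`; all gaps are `≥ c` because negative positions are beads,
and `c` itself is a gap because `0` is not a bead. Hence `c = min_t p_t = p_{u 0}`, the ordering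
`u` being exactly the one that sorts the `p_t`. Counting the nonnegative beads runner by runner
gives `ℓ = ∑ a_t - c`. On the other side `⌊(w⁻¹ρ/n)_0 - (w⁻¹ρ/n)_j⌋ = ⌊(p_{u j} - p_{u 0}) / n⌋`,
which sums to `∑ a_t - p_{u 0}`. Both counts reduce to Hermite's identity
`∑_{t < n} ⌊(m + t) / n⌋ = m`.
-/

theorem sum_range_add_ediv (m : ℤ) {n : ℕ} (hn : 0 < n) :
    ∑ t ∈ range n, (m + t) / (n : ℤ) = m := by
  have hn' : (n : ℤ) ≠ 0 := by omega
  have hstep : ∀ m : ℤ,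
      ∑ t ∈ range n, (m + 1 + t) / (n : ℤ) = ∑ t ∈ range n, (m + t) / n + 1 := by
    intro m
    have h := (sum_range_succ' (fun t : ℕ => (m + t) / (n : ℤ)) n).symm.trans
      (sum_range_succ (fun t : ℕ => (m + t) / (n : ℤ)) n)
    have hmn : (m + n) / (n : ℤ) = m / n + 1 := by simpa using Int.add_mul_ediv_right m 1 hn'
    simp only [Nat.cast_add, Nat.cast_one, Nat.cast_zero, add_zero, hmn] at h
    simp only [add_assoc, add_comm (1 : ℤ)]
    linarith
  induction m using Int.induction_on with
  | zero => exact sum_eq_zero fun t ht => Int.ediv_eq_zero_of_lt (by omega) (by simpa using ht)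
  | succ k ih => rw [hstep, ih]
  | pred k ih => have := hstep (-k - 1); rw [sub_add_cancel, ih] at this; linarith

theorem floor_intCast_div_natCast {K : Type*} [Field K] [LinearOrder K] [IsOrderedRing K]
    [FloorRing K] (m : ℤ) (n : ℕ) : ⌊(m : K) / n⌋ = m / n := by
  rw [Int.floor_div_natCast, Int.floor_intCast]

theorem fin_sum_univ_succ_of_pos {M : Type*} [AddCommMonoid M] {n : ℕ} (hn : 0 < n)
    (g : Fin n → M) :
    ∑ i, g i = g ⟨0, hn⟩ + ∑ j : Fin (n - 1), g ⟨(j : ℕ) + 1, by omega⟩ := by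
  obtain ⟨m, rfl⟩ : ∃ m, n = m + 1 := ⟨n - 1, by omega⟩
  exact Fin.sum_univ_succ g

theorem floor_winv_rho_sub (n : ℕ) (u : Equiv.Perm (Fin n)) (a : Fin n → ℤ) (i j : Fin n) :
    ⌊winv n u a (fun t => rhoV n t / n) i - winv n u a (fun t => rhoV n t / n) j⌋ =
      (a (u j) * n + u j - (a (u i) * n + u i)) / n := by
  have hn : (n : ℝ) ≠ 0 := by exact_mod_cast i.pos.ne'
  rw [← floor_intCast_div_natCast (K := ℝ)]
  congr 1
  simp only [winv, rhoV]
  push_cast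
  field_simp
  ring

theorem sum_floor_winv_rho_sub (n : ℕ) (u : Equiv.Perm (Fin n)) (a : Fin n → ℤ) (i : Fin n) :
    ∑ j, ⌊winv n u a (fun t => rhoV n t / n) i - winv n u a (fun t => rhoV n t / n) j⌋ =
      ∑ t, a t - (a (u i) * n + u i) := by
  set K := a (u i) * n + u i
  have hn' : (n : ℤ) ≠ 0 := by exact_mod_cast i.pos.ne'
  have hsplit : ∀ t : Fin n, (a t * n + t - K) / n = a t + (-K + (t : ℕ)) / n := fun t => by
    rw [show a t * n + t - K = -K + t + a t * n by ring, Int.add_mul_ediv_right _ _ hn', add_comm]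
  simp_rw [floor_winv_rho_sub]
  rw [Equiv.sum_comp u (fun t => (a t * n + t - K) / n)]
  simp_rw [hsplit]
  rw [sum_add_distrib, Fin.sum_univ_eq_sum_range (fun t => (-K + t) / (n : ℤ)),
    sum_range_add_ediv _ i.pos, sub_eq_add_neg]

theorem SortsMin.strictMono {n : ℕ} {u : Equiv.Perm (Fin n)} {a : Fin n → ℤ}
    (hu : SortsMin u a) : StrictMono fun i => a (u i) * n + u i := by
  intro i j hij
  rcases hu i j hij with h | ⟨h, h'⟩
  · have hui : ((u i : ℕ) : ℤ) < n := by exact_mod_cast (u i).isLt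
    have := mul_le_mul_of_nonneg_right (Int.add_one_le_of_lt h) (Int.natCast_nonneg n)
    rw [add_one_mul] at this
    dsimp only
    linarith [Int.natCast_nonneg (u j : ℕ)]
  · simp only [h, add_lt_add_iff_left, Nat.cast_lt]
    exact h'

/-- Position `q * n + i - c` is level `q` of runner `i`. -/
def AbacusLevels (n : ℕ) (B : ℤ → Prop) (a : Fin n → ℤ) (c : ℤ) : Prop :=
  ∀ (i : Fin n) (q : ℤ), B (q * n + ((i : ℕ) : ℤ) - c) ↔ q < a i

namespace AbacusLevels

variable {n : ℕ} {B : ℤ → Prop} {a : Fin n → ℤ} {c : ℤ}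

theorem le_mul_add (hB : AbacusLevels n B a c) (hneg : ∀ x < 0, B x) (i : Fin n) :
    c ≤ a i * n + i := by
  by_contra! h
  exact lt_irrefl _ ((hB i (a i)).1 (hneg _ (by omega)))

theorem exists_mul_add_le (hB : AbacusLevels n B a c) (hn : 0 < n) (h0 : ¬ B 0) :
    ∃ i : Fin n, a i * n + i ≤ c := by
  have : NeZero n := ⟨hn.ne'⟩
  obtain ⟨⟨q, i⟩, hqi⟩ := (Int.divModEquiv n).symm.surjective c
  rw [Int.divModEquiv_symm_apply] at hqi
  have hq : a i ≤ q := not_lt.1 fun h => h0 (by rwa [← hB, hqi, sub_self] at h)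
  exact ⟨i, by nlinarith⟩

theorem eq_mul_add_of_sortsMin (hB : AbacusLevels n B a c) (hn : 0 < n) (hneg : ∀ x < 0, B x)
    (h0 : ¬ B 0) {u : Equiv.Perm (Fin n)} (hu : SortsMin u a) :
    c = a (u ⟨0, hn⟩) * n + u ⟨0, hn⟩ := by
  obtain ⟨i, hi⟩ := hB.exists_mul_add_le hn h0
  refine le_antisymm (hB.le_mul_add hneg _) ?_
  calc a (u ⟨0, hn⟩) * n + u ⟨0, hn⟩ ≤ a (u (u.symm i)) * n + u (u.symm i) :=
        hu.strictMono.monotone (Fin.le_def.2 (Nat.zero_le _))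
    _ = a i * n + i := by rw [u.apply_symm_apply]
    _ ≤ c := hi

theorem card_nonneg_beads (hB : AbacusLevels n B a c) (hn : 0 < n) (hneg : ∀ x < 0, B x)
    {S : Finset ℤ} (hS : ∀ x, x ∈ S ↔ 0 ≤ x ∧ B x) : (#S : ℤ) = ∑ i, a i - c := by
  have : NeZero n := ⟨hn.ne'⟩
  have hn' : (0 : ℤ) < n := by exact_mod_cast hn
  set e := Int.divModEquiv n
  set lo : Fin n → ℤ := fun i => -(((i : ℕ) - c) / n)
  have hlo : ∀ i q, lo i ≤ q ↔ 0 ≤ q * n + i - c := fun i q => by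
    rw [neg_le, Int.le_ediv_iff_mul_le hn']
    constructor <;> intro h <;> linarith
  have hS' : S = univ.biUnion fun i => (Ico (lo i) (a i)).image fun q => e.symm (q, i) - c := by
    ext x
    simp only [hS, mem_biUnion, mem_univ, true_and, mem_image, mem_Ico,
      Int.divModEquiv_symm_apply, e]
    constructor
    · rintro ⟨hx, hBx⟩
      obtain ⟨⟨q, i⟩, hqi⟩ := e.symm.surjective (x + c)
      rw [Int.divModEquiv_symm_apply] at hqi
      obtain rfl : x = q * n + i - c := by linarith
      exact ⟨i, q, ⟨(hlo i q).2 hx, (hB i q).1 hBx⟩, rfl⟩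
    · rintro ⟨i, q, ⟨hq, hqa⟩, rfl⟩
      exact ⟨(hlo i q).1 hq, (hB i q).2 hqa⟩
  have hdisj : (↑(univ : Finset (Fin n)) : Set (Fin n)).PairwiseDisjoint
      fun i => (Ico (lo i) (a i)).image fun q => e.symm (q, i) - c := by
    intro i _ j _ hij
    simp only [Function.onFun, disjoint_left, mem_image]
    rintro _ ⟨q, -, rfl⟩ ⟨q', -, hq⟩
    exact hij (congrArg Prod.snd (e.symm.injective (sub_left_injective hq))).symm
  have hcard : ∀ i, (#((Ico (lo i) (a i)).image fun q => e.symm (q, i) - c) : ℤ) = a i - lo i :=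
    fun i => by
      rw [card_image_of_injective _ fun q q' h => congrArg Prod.fst
        (e.symm.injective (sub_left_injective h)), Int.card_Ico,
        Int.toNat_of_nonneg (sub_nonneg.2 ((hlo i _).2 (by linarith [hB.le_mul_add hneg i])))]
  have hsum_lo : ∑ i, lo i = c := by
    simp only [lo, sum_neg_distrib]
    rw [Fin.sum_univ_eq_sum_range (fun t => ((t : ℤ) - c) / n)]
    simp only [sub_eq_neg_add]
    rw [sum_range_add_ediv _ hn, neg_neg]
  rw [hS', card_biUnion hdisj]
  push_cast
  simp only [hcard, sum_sub_distrib, hsum_lo]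

end AbacusLevels

theorem betaP_strictAnti {lam : ℕ → ℕ} (ℓ : ℕ) (hlam : Antitone lam) :
    StrictAnti (betaP lam ℓ) := fun k k' h => by
  have := hlam h.le
  unfold betaP
  omega

theorem not_isBead_zero {lam : ℕ → ℕ} {ℓ : ℕ} (hpos : ∀ i, 0 < lam i ↔ i < ℓ) :
    ¬ IsBead lam ℓ 0 := by
  rintro (h | ⟨k, hk, hbk⟩)
  · exact lt_irrefl _ h
  · have := (hpos k).2 hk
    unfold betaP at hbk
    omega

theorem mem_image_betaP_iff {lam : ℕ → ℕ} {ℓ : ℕ} (hpos : ∀ i, 0 < lam i ↔ i < ℓ)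
    (x : ℤ) :
    x ∈ (range ℓ).image (betaP lam ℓ) ↔ 0 ≤ x ∧ IsBead lam ℓ x := by
  simp only [mem_image, mem_range, IsBead]
  constructor
  · rintro ⟨k, hk, rfl⟩
    have := (hpos k).2 hk
    exact ⟨by unfold betaP; omega, Or.inr ⟨k, hk, rfl⟩⟩
  · rintro ⟨hx, hneg | hbead⟩
    · omega
    · exact hbead

/-- the sum of the Shi coordinates `k_{w,α_{1,j}}` of the alcove
`w⁻¹A_0` over `1 ≤ j ≤ n-1` equals `ℓ(λ)`. -/
theorem row_coord_sum (n : ℕ) (hn : 2 ≤ n) (lam : ℕ → ℕ) (ℓ : ℕ)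
    (hcore : IsCore n lam ℓ) (a : Fin n → ℤ) (hbal : BalancedLevels n lam ℓ a)
    (u : Equiv.Perm (Fin n)) (hu : SortsMin u a) :
    (∑ j : Fin (n - 1),
      ⌊winv n u a (fun t => rhoV n t / n) ⟨0, by omega⟩ -
        winv n u a (fun t => rhoV n t / n)
          ⟨(j : ℕ) + 1, by have := j.isLt; omega⟩⌋) = (ℓ : ℤ) := by
  obtain ⟨hlam, hpos, -⟩ := hcore
  obtain ⟨-, c, (hc : AbacusLevels n (IsBead lam ℓ) a c)⟩ := hbal
  have hn0 : 0 < n := by omega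
  have hneg : ∀ x < 0, IsBead lam ℓ x := fun x hx => Or.inl hx
  have hℓ : (ℓ : ℤ) = ∑ i, a i - c := by
    rw [← hc.card_nonneg_beads hn0 hneg (mem_image_betaP_iff hpos),
      card_image_of_injective _ (betaP_strictAnti ℓ hlam).injective, card_range]
  have hsum := fin_sum_univ_succ_of_pos hn0
    fun i => ⌊winv n u a (fun t => rhoV n t / n) ⟨0, hn0⟩ -
      winv n u a (fun t => rhoV n t / n) i⌋
  simp only [sub_self, Int.floor_zero, zero_add] at hsum
  rw [← hsum, sum_floor_winv_rho_sub, hℓ,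
    hc.eq_mul_add_of_sortsMin hn0 hneg (not_isBead_zero hpos) hu]

end Shi
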